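/- Let q be a conjunctive query over a schema R and let Σ be a linear set of TGDs over R in normal form. Then every conjunctive query q′ obtainable from q by a finite sequence of rewriting and factorization steps (in particular, every q′ ∈ q_Σ = XRewrite(q,Σ)) satisfies |body(q′)| ≤ |body(q)|. -/
import Mathlib


namespace OntDB

/-- Terms: constants, labeled nulls, and variables (each indexed by naturals). -/
inductive Term : Type
  | const : ℕ → Term
  | null  : ℕ → Term
  | var   : ℕ → Term
deriving DecidableEq

/-- a term is not a labeled null -/
def Term.noNull : Term → Prop
  | .null _ => False
  | _ => True

/-- Atoms: a predicate symbol applied to a list of argument terms. -/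
structure Atom : Type where
  pred : ℕ
  args : List Term
deriving DecidableEq

/-- A relational schema: a finite set of predicate symbols, each with an arity. -/
structure Schema : Type where
  preds : Finset ℕ
  ar : ℕ → ℕ

/-- arity(R) : the maximum arity over the predicates of R -/
def Schema.maxArity (R : Schema) : ℕ := R.preds.sup R.ar

def Atom.overSchema (R : Schema) (a : Atom) : Prop :=
  a.pred ∈ R.preds ∧ a.args.length = R.ar a.pred

/-- applying a substitution to an atom -/
def Atom.subst (h : Term → Term) (a : Atom) : Atom := ⟨a.pred, a.args.map h⟩

/-- a substitution fixes every constant -/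
def constFix (h : Term → Term) : Prop := ∀ c, h (Term.const c) = Term.const c

/-- A homomorphism from the set of atoms `A` to the set of atoms `A'`. -/
def IsHom (h : Term → Term) (A A' : Set Atom) : Prop :=
  constFix h ∧ ∀ a ∈ A, a.subst h ∈ A'

/-- the variables occurring in an atom -/
def Atom.vars (a : Atom) : Finset ℕ :=
  (a.args.filterMap (fun t => match t with | .var v => some v | _ => none)).toFinset

/-- the number of occurrences of the variable `v` in the atom `a` -/
def Atom.countVar (a : Atom) (v : ℕ) : ℕ := a.args.count (Term.var v)

/-- the variables occurring in a finite set of atoms -/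
def varsOfSet (S : Finset Atom) : Finset ℕ := S.sup Atom.vars

/-- A conjunctive query: a head atom together with a finite set of body atoms. -/
structure CQ : Type where
  head : Atom
  body : Finset Atom
deriving DecidableEq

/-- the variables occurring in a CQ (head and body) -/
def CQ.vars (q : CQ) : Finset ℕ := q.head.vars ∪ varsOfSet q.body

/-- the number of occurrences of the variable `v` in the CQ `q` (head and body) -/
def CQ.countVar (q : CQ) (v : ℕ) : ℕ := q.head.countVar v + ∑ a ∈ q.body, a.countVar v

/-- a variable is shared in `q` if it occurs more than once in `q` -/
def CQ.shared (q : CQ) (v : ℕ) : Prop := 2 ≤ q.countVar v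

/-- a CQ over a schema: body atoms over the schema, and no labeled nulls occur -/
def CQ.overSchema (R : Schema) (q : CQ) : Prop :=
  (∀ a ∈ q.body, a.overSchema R ∧ ∀ t ∈ a.args, t.noNull) ∧ ∀ t ∈ q.head.args, t.noNull

/-- a tuple of constants -/
def isConstTuple (t : List Term) : Prop := ∀ s ∈ t, ∃ c, s = Term.const c

/-- Evaluation of a CQ over an instance: the tuples of constants obtained as images
of the distinguished terms under homomorphisms of the body into the instance. -/
def CQ.eval (q : CQ) (I : Set Atom) : Set (List Term) :=
  { t | isConstTuple t ∧ ∃ h : Term → Term, IsHom h ↑q.body I ∧ q.head.args.map h = t }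

/-- evaluation of a (possibly infinite) union of CQs -/
def ucqEval (Q : Set CQ) (I : Set Atom) : Set (List Term) := ⋃ q ∈ Q, q.eval I

/-- A TGD (in normal form representation): a finite set of body atoms plus a single
head atom; the existentially quantified variables are exactly the head variables
that do not occur in the body. -/
structure TGD : Type where
  body : Finset Atom
  head : Atom
deriving DecidableEq

/-- the universally quantified variables occurring in the head -/
def TGD.frontier (σ : TGD) : Finset ℕ := varsOfSet σ.body ∩ σ.head.vars

/-- the existentially quantified variables -/
def TGD.exVars (σ : TGD) : Finset ℕ := σ.head.vars \ varsOfSet σ.body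

def TGD.vars (σ : TGD) : Finset ℕ := varsOfSet σ.body ∪ σ.head.vars

/-- normal form: at most one existentially quantified variable, occurring once -/
def TGD.NormalForm (σ : TGD) : Prop :=
  σ.exVars.card ≤ 1 ∧ ∀ v ∈ σ.exVars, σ.head.countVar v = 1

/-- a TGD is linear if its body consists of a single atom -/
def TGD.Linear (σ : TGD) : Prop := σ.body.card = 1

/-- a set of TGDs is linear if all its members are -/
def LinearSet (Sig : Finset TGD) : Prop := ∀ σ ∈ Sig, σ.Linear

def TGD.overSchema (R : Schema) (σ : TGD) : Prop :=
  σ.body.Nonempty ∧ (∀ a ∈ σ.body, a.overSchema R ∧ ∀ t ∈ a.args, t.noNull) ∧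
  σ.head.overSchema R ∧ ∀ t ∈ σ.head.args, t.noNull

/-- satisfaction of a TGD by an instance -/
def TGD.sat (σ : TGD) (I : Set Atom) : Prop :=
  ∀ h : Term → Term, IsHom h ↑σ.body I →
    ∃ h' : Term → Term, constFix h' ∧
      (∀ v ∈ σ.frontier, h' (Term.var v) = h (Term.var v)) ∧ σ.head.subst h' ∈ I

/-- satisfaction of a set of TGDs -/
def satSet (Sig : Finset TGD) (I : Set Atom) : Prop := ∀ σ ∈ Sig, σ.sat I

/-- a database for a schema: a finite set of atoms over the schema whose
arguments are constants -/
def IsDatabase (R : Schema) (D : Finset Atom) : Prop :=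
  ∀ a ∈ D, a.overSchema R ∧ ∀ t ∈ a.args, ∃ c, t = Term.const c

/-- the certain answers of a CQ w.r.t. a database and a set of TGDs -/
def certAns (q : CQ) (D : Finset Atom) (Sig : Finset TGD) : Set (List Term) :=
  { t | ∀ I : Set Atom, ↑D ⊆ I → satSet Sig I → t ∈ q.eval I }

/-- the certain answers of a (possibly infinite) union of CQs -/
def certAnsUCQ (Q : Set CQ) (D : Finset Atom) (Sig : Finset TGD) : Set (List Term) :=
  { t | ∀ I : Set Atom, ↑D ⊆ I → satSet Sig I → t ∈ ucqEval Q I }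

/-- a unifier for a finite set of atoms -/
def IsUnifier (γ : Term → Term) (S : Finset Atom) : Prop :=
  constFix γ ∧ ∀ a ∈ S, ∀ b ∈ S, a.subst γ = b.subst γ

def Unifies (S : Finset Atom) : Prop := ∃ γ, IsUnifier γ S

/-- most general unifier -/
def IsMGU (γ : Term → Term) (S : Finset Atom) : Prop :=
  IsUnifier γ S ∧ ∀ γ', IsUnifier γ' S → ∃ δ : Term → Term, ∀ t, γ' t = δ (γ t)

/-- `i` is the position of the existentially quantified variable in head(σ) -/
def TGD.exPos (σ : TGD) (i : ℕ) : Prop :=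
  ∃ z ∈ σ.exVars, σ.head.args[i]? = some (Term.var z)

/-- applicability of the TGD σ to the set S ⊆ body(q) -/
def Applicable (q : CQ) (σ : TGD) (S : Finset Atom) : Prop :=
  S.Nonempty ∧ S ⊆ q.body ∧ Unifies (S ∪ {σ.head}) ∧
  ∀ a ∈ S, ∀ i, σ.exPos i →
    (∀ c, a.args[i]? ≠ some (Term.const c)) ∧
    ∀ v, a.args[i]? = some (Term.var v) → ¬ q.shared v

/-- factorizability of the set S ⊆ body(q) w.r.t. the TGD σ -/
def Factorizable (q : CQ) (σ : TGD) (S : Finset Atom) : Prop :=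
  S ⊆ q.body ∧ 2 ≤ S.card ∧ Unifies S ∧ (∃ i, σ.exPos i) ∧
  ∃ V : ℕ, V ∉ varsOfSet (q.body \ S) ∧
    ∀ a ∈ S, (∃ i, σ.exPos i ∧ a.args[i]? = some (Term.var V)) ∧
      ∀ j, a.args[j]? = some (Term.var V) → σ.exPos j

/-- renaming of variables -/
def renT (ρ : ℕ → ℕ) : Term → Term
  | .var v => .var (ρ v)
  | t => t

/-- renaming the variables of a TGD -/
def TGD.rename (σ : TGD) (ρ : ℕ → ℕ) : TGD :=
  ⟨σ.body.image (Atom.subst (renT ρ)), σ.head.subst (renT ρ)⟩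

/-- applying a substitution to a CQ -/
def CQ.subst (q : CQ) (γ : Term → Term) : CQ :=
  ⟨q.head.subst γ, q.body.image (Atom.subst γ)⟩

/-- the restriction on MGUs used by XRewrite under sticky sets of TGDs:
every variable of the protected set `W` (the variables of the input query) is
mapped to a variable of `W` (or to a constant).  For `W = ∅` no restriction. -/
def ProtectsVars (W : Finset ℕ) (γ : Term → Term) : Prop :=
  ∀ v ∈ W, (∃ u ∈ W, γ (Term.var v) = Term.var u) ∨ ∃ c, γ (Term.var v) = Term.const c

/-- the substitution is the identity on all variables outside `V` -/
def IdOutside (V : Finset ℕ) (γ : Term → Term) : Prop :=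
  ∀ v, v ∉ V → γ (Term.var v) = Term.var v

/-- one rewriting step of XRewrite (applied to `q`, producing `q'`) -/
def IsRewriteStep (Sig : Finset TGD) (W : Finset ℕ) (q q' : CQ) : Prop :=
  ∃ σ ∈ Sig, ∃ ρ : ℕ → ℕ, Function.Injective ρ ∧ (∀ v, ρ v ∉ q.vars) ∧
    ∃ S : Finset Atom, Applicable q (σ.rename ρ) S ∧
      ∃ γ : Term → Term, IsMGU γ (S ∪ {(σ.rename ρ).head}) ∧
        IdOutside (varsOfSet (S ∪ {(σ.rename ρ).head})) γ ∧ ProtectsVars W γ ∧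
        q' = (CQ.mk q.head ((q.body \ S) ∪ (σ.rename ρ).body)).subst γ

/-- one factorization step of XRewrite -/
def IsFactStep (Sig : Finset TGD) (W : Finset ℕ) (q q' : CQ) : Prop :=
  ∃ σ ∈ Sig, ∃ S : Finset Atom, Factorizable q σ S ∧
    ∃ γ : Term → Term, IsMGU γ S ∧ IdOutside (varsOfSet S) γ ∧ ProtectsVars W γ ∧
      q' = q.subst γ

/-- the CQs obtainable from q by a finite sequence of rewriting and
factorization steps -/
inductive Reach (Sig : Finset TGD) (W : Finset ℕ) (q : CQ) : CQ → Prop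
  | refl : Reach Sig W q q
  | rw {p p' : CQ} : Reach Sig W q p → IsRewriteStep Sig W p p' → Reach Sig W q p'
  | fact {p p' : CQ} : Reach Sig W q p → IsFactStep Sig W p p' → Reach Sig W q p'

/-- the output of XRewrite(q,Σ): q together with all CQs obtainable from q by a
finite sequence of rewriting and factorization steps whose last step is a
rewriting step -/
def XRewriteOut (Sig : Finset TGD) (W : Finset ℕ) (q : CQ) : Set CQ :=
  {q} ∪ { p' | ∃ p : CQ, Reach Sig W q p ∧ IsRewriteStep Sig W p p' }

/-- two CQs are the same up to bijective variable renaming -/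
def CQEquiv (p p' : CQ) : Prop :=
  ∃ ρ : ℕ → ℕ, Function.Bijective ρ ∧ p.subst (renT ρ) = p'

/-- the SMarking procedure: `Marked Sig σ v` says that the body variable `v` of
σ gets marked -/
inductive Marked (Sig : Finset TGD) : TGD → ℕ → Prop
  | init {σ : TGD} {v : ℕ} : σ ∈ Sig → v ∈ varsOfSet σ.body → v ∉ σ.head.vars →
      Marked Sig σ v
  | prop {σ σ' : TGD} {v : ℕ} (b : Atom) (u : ℕ → ℕ) : σ ∈ Sig → σ' ∈ Sig →
      v ∈ varsOfSet σ.body → v ∈ σ.head.vars → b ∈ σ'.body →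
      (∀ i : ℕ, σ.head.args[i]? = some (Term.var v) →
        b.args[i]? = some (Term.var (u i))) →
      (∀ i : ℕ, σ.head.args[i]? = some (Term.var v) → Marked Sig σ' (u i)) →
      Marked Sig σ v

/-- a set of TGDs is sticky if every marked variable occurs only once in the
body of its TGD -/
def Sticky (Sig : Finset TGD) : Prop :=
  ∀ σ ∈ Sig, ∀ v : ℕ, Marked Sig σ v → (∑ a ∈ σ.body, a.countVar v) = 1

/- ## Propagation graph and atom coverage -/

/-- a position of a schema: a predicate together with an argument index -/
abbrev Pos := ℕ × ℕ

/-- the edges of the propagation graph -/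
def PGEdge (σ : TGD) (pb ph : Pos) : Prop :=
  ∃ b ∈ σ.body, ∃ v : ℕ,
    b.pred = pb.1 ∧ b.args[pb.2]? = some (Term.var v) ∧
    σ.head.pred = ph.1 ∧ σ.head.args[ph.2]? = some (Term.var v)

/-- `vs` is a path in the propagation graph of Σ with edge labels `ls` -/
def IsPath (Sig : Finset TGD) (vs : List Pos) (ls : List TGD) : Prop :=
  vs.length = ls.length + 1 ∧
  ∀ j < ls.length, ∃ σ pb ph,
    ls[j]? = some σ ∧ vs[j]? = some pb ∧ vs[j + 1]? = some ph ∧ σ ∈ Sig ∧ PGEdge σ pb ph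

/-- a minimal path: no cycle is traversed twice consecutively -/
def MinimalPath (Sig : Finset TGD) (vs : List Pos) (ls : List TGD) : Prop :=
  IsPath Sig vs ls ∧
  ¬ ∃ i j : ℕ, 0 < i ∧ i + 1 < vs.length ∧ 0 < j ∧ j ≤ i ∧ i + j < vs.length ∧
      (∀ k ≤ j, vs[i - j + k]? = vs[i + k]?) ∧ ∀ k < j, ls[i - j + k]? = ls[i + k]?

/-- a tight sequence of (linear) TGDs -/
def TightSeq (σs : List TGD) : Prop :=
  ∀ j, j + 1 < σs.length →
    ∃ σ1 σ2, σs[j]? = some σ1 ∧ σs[j + 1]? = some σ2 ∧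
      ∃ h : Term → Term, constFix h ∧ σ2.body.image (Atom.subst h) = {σ1.head}

/-- a sequence of TGDs compatible to an atom -/
def CompatibleTo (σs : List TGD) (a : Atom) : Prop :=
  ∃ σ1, σs[0]? = some σ1 ∧ ∃ h : Term → Term, constFix h ∧
    σ1.body.image (Atom.subst h) = {a}

/-- pos(a,t): the positions (indices) at which the term t occurs in the atom a -/
def atomPos (a : Atom) (t : Term) : Set ℕ := { i | a.args[i]? = some t }

/-- T(q,a): the constants of a together with the variables of a shared in q -/
def Tq (q : CQ) (a : Atom) : Set Term :=
  { t | t ∈ a.args ∧ ((∃ c, t = Term.const c) ∨ ∃ v, t = Term.var v ∧ q.shared v) }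

/-- atom coverage: a covers b w.r.t. q and Σ -/
def Covers (Sig : Finset TGD) (q : CQ) (a b : Atom) : Prop :=
  (∀ t ∈ Tq q b, t ∈ a.args) ∧
  ∃ σs : List TGD, σs ≠ [] ∧ (∀ σ ∈ σs, σ ∈ Sig) ∧ TightSeq σs ∧ CompatibleTo σs a ∧
    ∀ t ∈ Tq q b, ∀ i ∈ atomPos b t,
      ∃ vs : List Pos, MinimalPath Sig vs σs ∧
        (∃ p0 : Pos, vs[0]? = some p0 ∧ p0.1 = a.pred ∧ p0.2 ∈ atomPos a t) ∧
        vs[vs.length - 1]? = some (b.pred, i)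


/-- under a linear set of TGDs in normal form, every CQ obtainable
from q by rewriting and factorization steps (in particular every member of
q_Σ = XRewrite(q,Σ)) has at most |body(q)| body atoms. -/
theorem xrewrite_linear_body_card_le
    (R : Schema) (Sig : Finset TGD) (q : CQ)
    (hq : q.overSchema R)
    (hover : ∀ σ ∈ Sig, σ.overSchema R) (hnf : ∀ σ ∈ Sig, σ.NormalForm)
    (hlin : LinearSet Sig) :
    ∀ q' : CQ, Reach Sig ∅ q q' → q'.body.card ≤ q.body.card := by
  intro q' hreach
  induction hreach with
  | refl => exact le_refl _
  | @rw p p' hprev hstep ih =>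
    obtain ⟨σ, hσ, ρ, _, _, S, hApp, γ, _, _, _, hq'⟩ := hstep
    have hS1 : 1 ≤ S.card := Finset.card_pos.mpr hApp.1
    have hSsub : S ⊆ p.body := hApp.2.1
    have hSle : S.card ≤ p.body.card := Finset.card_le_card hSsub
    have hbody : p'.body = ((p.body \ S) ∪ (σ.rename ρ).body).image (Atom.subst γ) := by
      rw [hq']; rfl
    have hσbody : (σ.rename ρ).body.card ≤ 1 := by
      have : (σ.rename ρ).body.card ≤ σ.body.card := Finset.card_image_le
      exact this.trans (le_of_eq (hlin σ hσ))
    calc p'.body.card ≤ ((p.body \ S) ∪ (σ.rename ρ).body).card := by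
            rw [hbody]; exact Finset.card_image_le
      _ ≤ (p.body \ S).card + (σ.rename ρ).body.card := Finset.card_union_le _ _
      _ ≤ p.body.card := by
            have := Finset.card_sdiff_of_subset hSsub
            omega
      _ ≤ q.body.card := ih
  | @fact p p' hprev hstep ih =>
    obtain ⟨σ, hσ, S, hFact, γ, _, _, _, hq'⟩ := hstep
    calc p'.body.card = (p.body.image (Atom.subst γ)).card := by rw [hq']; rfl
      _ ≤ p.body.card := Finset.card_image_le
      _ ≤ q.body.card := ih

end OntDB
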